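/- arXiv:2409.20008 — 2 statements merged into one kernel-verified Lean document; each statement's English description precedes it below -/
import Mathlib

section
/- Let A be a symmetric bilinear form on a real vector space, let U, U_h, X_h be elements, λ, λ_h real numbers, and u, u_h, x_h elements of an inner product space with ‖u‖ = ‖u_h‖ = 1. Assume A(U_h, U_h) = -λ_h, A(U_h, V) = -λ_h (u_h, v) for V ∈ {X_h} with corresponding scalar component x_h, and (u_h, x_h) = (u_h, u). Then λ - λ_h = -A(U,U) + A(X_h, X_h) - A(U_h - X_h, U_h - X_h) - λ_h ‖u - u_h‖², provided A(U,U) = -λ. -/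
open RealInnerProductSpace

theorem LinearMap.apply_sub_sub_self_of_symm {R M : Type*} [CommRing R] [AddCommGroup M]
    [Module R M] (A : M →ₗ[R] M →ₗ[R] R) (hA : ∀ x y, A x y = A y x) (x y : M) :
    A (x - y) (x - y) = A x x - 2 * A x y + A y y := by
  simp only [map_sub, LinearMap.sub_apply, hA y x]
  ring

/-- Identity (3.14): eigenvalue error identity used for the lower-bound analysis. -/
theorem stmt_1
    {U : Type*} [AddCommGroup U] [Module ℝ U]
    {E : Type*} [NormedAddCommGroup E] [InnerProductSpace ℝ E]
    (A : U →ₗ[ℝ] U →ₗ[ℝ] ℝ) (hA : ∀ x y, A x y = A y x)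
    (𝒰 𝒰h 𝒳h : U) (lam lamh : ℝ) (u uh xh : E)
    (hu : ‖u‖ = 1) (huh : ‖uh‖ = 1)
    (hUU : A 𝒰 𝒰 = -lam)
    (hUhUh : A 𝒰h 𝒰h = -lamh)
    (hUhXh : A 𝒰h 𝒳h = -lamh * ⟪uh, xh⟫)
    (hx : ⟪uh, xh⟫ = ⟪uh, u⟫) :
    lam - lamh =
      -A 𝒰 𝒰 + A 𝒳h 𝒳h - A (𝒰h - 𝒳h) (𝒰h - 𝒳h) - lamh * ‖u - uh‖ ^ 2 := by
  rw [A.apply_sub_sub_self_of_symm hA, norm_sub_sq_real, hu, huh, real_inner_comm uh u,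
    hUU, hUhUh, hUhXh, hx]
  ring
end

section
/- Let (a_n) and (b_n) be real sequences with a_n ≤ a_{n+1} ≤ λ ≤ b_{n+1} ≤ b_n for all n, and suppose a_n → λ and b_n → λ. If a_n = λ - C₁ h_n² + o(h_n²) and b_n = λ + C₂ h_n² + o(h_n²) with C₁, C₂ > 0 and h_n → 0, then the extrapolated sequence λ̂_n = ρ_n b_n + (1-ρ_n) a_n with ρ_n = (a_{n-1} - a_n)/((b_n - b_{n-1}) + (a_{n-1} - a_n)) satisfies (λ̂_n - λ)/h_n² → 0. -/
open Filter Topology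


private lemma stmt_10_aux (C₁ C₂ lam H U U' V V' : ℝ) (hH : H ≠ 0)
    (hd : -3 * (C₁ + C₂) + 4 * U - U' + V' - 4 * V ≠ 0) :
    (H ^ 2 * (-3 * C₁ + 4 * U - U') / (H ^ 2 * (-3 * (C₁ + C₂) + 4 * U - U' + V' - 4 * V)) *
        (lam + C₂ * H ^ 2 + V' * H ^ 2) +
      (1 - H ^ 2 * (-3 * C₁ + 4 * U - U') /
          (H ^ 2 * (-3 * (C₁ + C₂) + 4 * U - U' + V' - 4 * V))) *
        (lam - C₁ * H ^ 2 + U' * H ^ 2) - lam) / H ^ 2 =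
    ((-3 * C₁ + 4 * U - U') * (C₂ + V') + (-3 * C₂ + V' - 4 * V) * (-C₁ + U')) /
      (-3 * (C₁ + C₂) + 4 * U - U' + V' - 4 * V) := by
  rw [mul_div_mul_left _ _ (pow_ne_zero 2 hH)]
  set d := -3 * (C₁ + C₂) + 4 * U - U' + V' - 4 * V with hdd
  set nN := -3 * C₁ + 4 * U - U' with hnn
  rw [div_eq_div_iff (pow_ne_zero 2 hH) hd]
  have hc : nN / d * d = nN := div_mul_cancel₀ _ hd
  have e : (nN / d * (lam + C₂ * H ^ 2 + V' * H ^ 2) +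
      (1 - nN / d) * (lam - C₁ * H ^ 2 + U' * H ^ 2) - lam) * d
      = nN * (lam + C₂ * H ^ 2 + V' * H ^ 2) +
        (d - nN) * (lam - C₁ * H ^ 2 + U' * H ^ 2) - lam * d := by
    calc (nN / d * (lam + C₂ * H ^ 2 + V' * H ^ 2) +
        (1 - nN / d) * (lam - C₁ * H ^ 2 + U' * H ^ 2) - lam) * d
        = (nN / d * d) * (lam + C₂ * H ^ 2 + V' * H ^ 2) +
          (d - nN / d * d) * (lam - C₁ * H ^ 2 + U' * H ^ 2) - lam * d := by ring
      _ = nN * (lam + C₂ * H ^ 2 + V' * H ^ 2) +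
          (d - nN) * (lam - C₁ * H ^ 2 + U' * H ^ 2) - lam * d := by rw [hc]
  rw [e, hdd, hnn]
  ring

/-- The convex-combination post-processing eliminates the leading quadratic error:
`(λ̂_n - λ)/h_n² → 0`. -/
theorem stmt_10 (lam C₁ C₂ : ℝ) (hC₁ : 0 < C₁) (hC₂ : 0 < C₂)
    (a b h r s : ℕ → ℝ)
    (hpos : ∀ n, 0 < h n) (hhalf : ∀ n, h (n + 1) = h n / 2)
    (hh0 : Tendsto h atTop (𝓝 0))
    (hamono : ∀ n, a n ≤ a (n + 1)) (hbmono : ∀ n, b (n + 1) ≤ b n)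
    (halam : ∀ n, a n ≤ lam) (hblam : ∀ n, lam ≤ b n)
    (halim : Tendsto a atTop (𝓝 lam)) (hblim : Tendsto b atTop (𝓝 lam))
    (haexp : ∀ n, a n = lam - C₁ * h n ^ 2 + r n)
    (hr : Tendsto (fun n => r n / h n ^ 2) atTop (𝓝 0))
    (hbexp : ∀ n, b n = lam + C₂ * h n ^ 2 + s n)
    (hs : Tendsto (fun n => s n / h n ^ 2) atTop (𝓝 0)) :
    Tendsto
      (fun n =>
        ((((a n - a (n + 1)) / ((b (n + 1) - b n) + (a n - a (n + 1)))) * b (n + 1) +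
            (1 - (a n - a (n + 1)) / ((b (n + 1) - b n) + (a n - a (n + 1)))) * a (n + 1)) -
          lam) / h (n + 1) ^ 2)
      atTop (𝓝 0) := by
  set u : ℕ → ℝ := fun n => r n / h n ^ 2 with hu_def
  set v : ℕ → ℝ := fun n => s n / h n ^ 2 with hv_def
  have hne : ∀ n, h n ≠ 0 := fun n => (hpos n).ne'
  have hrn : ∀ n, r n = u n * h n ^ 2 := fun n => by
    simp only [hu_def]; rw [div_mul_cancel₀ _ (pow_ne_zero 2 (hne n))]
  have hsn : ∀ n, s n = v n * h n ^ 2 := fun n => by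
    simp only [hv_def]; rw [div_mul_cancel₀ _ (pow_ne_zero 2 (hne n))]
  have hu1 : Tendsto (fun n => u (n + 1)) atTop (𝓝 0) :=
    hr.comp (tendsto_add_atTop_nat 1)
  have hv1 : Tendsto (fun n => v (n + 1)) atTop (𝓝 0) :=
    hs.comp (tendsto_add_atTop_nat 1)
  -- the normalized denominator
  have hden : Tendsto (fun n => -3 * (C₁ + C₂) + 4 * u n - u (n + 1) + v (n + 1) - 4 * v n)
      atTop (𝓝 (-3 * (C₁ + C₂))) := by
    have := (((((tendsto_const_nhds (x := -3 * (C₁ + C₂)) (f := atTop)).add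
      (hr.const_mul 4)).sub hu1).add hv1).sub (hs.const_mul 4))
    simpa using this
  have hLne : (-3 * (C₁ + C₂)) ≠ 0 := by nlinarith
  have hdne : ∀ᶠ n in atTop,
      (-3 * (C₁ + C₂) + 4 * u n - u (n + 1) + v (n + 1) - 4 * v n) ≠ 0 :=
    hden.eventually_ne hLne
  -- numerator pieces
  have hnN : Tendsto (fun n => -3 * C₁ + 4 * u n - u (n + 1)) atTop (𝓝 (-3 * C₁)) := by
    have := ((tendsto_const_nhds (x := -3 * C₁) (f := atTop)).add (hr.const_mul 4)).sub hu1
    simpa using this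
  have hmid : Tendsto (fun n => -3 * C₂ + v (n + 1) - 4 * v n) atTop (𝓝 (-3 * C₂)) := by
    have := ((tendsto_const_nhds (x := -3 * C₂) (f := atTop)).add hv1).sub (hs.const_mul 4)
    simpa using this
  have hC2v : Tendsto (fun n => C₂ + v (n + 1)) atTop (𝓝 C₂) := by
    have := (tendsto_const_nhds (x := C₂) (f := atTop)).add hv1
    simpa using this
  have hC1u : Tendsto (fun n => -C₁ + u (n + 1)) atTop (𝓝 (-C₁)) := by
    have := (tendsto_const_nhds (x := -C₁) (f := atTop)).add hu1
    simpa using this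
  have hG : Tendsto (fun n =>
      ((-3 * C₁ + 4 * u n - u (n + 1)) * (C₂ + v (n + 1)) +
        (-3 * C₂ + v (n + 1) - 4 * v n) * (-C₁ + u (n + 1))) /
      (-3 * (C₁ + C₂) + 4 * u n - u (n + 1) + v (n + 1) - 4 * v n))
      atTop (𝓝 0) := by
    have := ((hnN.mul hC2v).add (hmid.mul hC1u)).div hden hLne
    have heq : ((-3 * C₁) * C₂ + (-3 * C₂) * (-C₁)) / (-3 * (C₁ + C₂)) = 0 := by
      rw [div_eq_zero_iff]; left; ring
    rwa [heq] at this
  -- eventual equality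
  have key : ∀ᶠ n in atTop,
      ((((a n - a (n + 1)) / ((b (n + 1) - b n) + (a n - a (n + 1)))) * b (n + 1) +
          (1 - (a n - a (n + 1)) / ((b (n + 1) - b n) + (a n - a (n + 1)))) * a (n + 1)) -
        lam) / h (n + 1) ^ 2 =
      ((-3 * C₁ + 4 * u n - u (n + 1)) * (C₂ + v (n + 1)) +
        (-3 * C₂ + v (n + 1) - 4 * v n) * (-C₁ + u (n + 1))) /
      (-3 * (C₁ + C₂) + 4 * u n - u (n + 1) + v (n + 1) - 4 * v n) := by
    filter_upwards [hdne] with n hdn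
    have hn := hne n
    have h2 : (h n / 2) ≠ 0 := by positivity
    have hN : a n - a (n + 1) = (h n / 2) ^ 2 * (-3 * C₁ + 4 * u n - u (n + 1)) := by
      rw [haexp n, haexp (n + 1), hhalf n, hrn n, hrn (n + 1), hhalf n]
      field_simp
      ring
    have hD : (b (n + 1) - b n) + (a n - a (n + 1)) =
        (h n / 2) ^ 2 * (-3 * (C₁ + C₂) + 4 * u n - u (n + 1) + v (n + 1) - 4 * v n) := by
      rw [haexp n, haexp (n + 1), hbexp n, hbexp (n + 1), hhalf n, hrn n, hrn (n + 1),
        hsn n, hsn (n + 1), hhalf n]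
      field_simp
      ring
    rw [hD, hN, haexp (n + 1), hbexp (n + 1), hrn (n + 1), hsn (n + 1), hhalf n]
    revert hdn
    generalize u n = U
    generalize u (n + 1) = U'
    generalize v n = V
    generalize v (n + 1) = V'
    intro hdn
    exact stmt_10_aux C₁ C₂ lam (h n / 2) U U' V V' h2 hdn
  exact hG.congr' (Filter.EventuallyEq.symm key)
end
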